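/- Let a ∈ ℝ, 1 < p < ∞, 1 ≤ q, r ≤ ∞, and let p' and q' be the conjugate exponents of p and q. Let E ⊆ Ω be measurable with μ(E) < ∞. Then: (1) if Σ_{u≥-1} 2^{uaq} μ(A_u ∩ E)^{q/p} < ∞ (with the sup-modification when q = ∞), then ‖χ_E‖*_{HL^{a,r}_{p,q}} < ∞; and (2) if Σ_{u≥-1} 2^{-uaq'} μ(A_u ∩ E)^{q'/p'} < ∞ (with the sup-modification when q' = ∞), then there exists a finite constant C_E such that ∫_E f dμ ≤ C_E ‖f‖*_{HL^{a,r}_{p,q}} for every nonnegative measurable f on Ω. Consequently, under (1) and (2) the functional ‖·‖*_{HL^{a,r}_{p,q}} is a Banach function norm. -/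

import Mathlib

open MeasureTheory ENNReal Set Filter Topology

noncomputable section

variable {X : Type*}

/-- The decreasing rearrangement `f*` of `f` with respect to `μ` :
`f*(s) = inf {α ≥ 0 : μ({x : |f(x)| > α}) ≤ s}`. -/
def rearr [MeasurableSpace X] (μ : Measure X) (f : X → ℝ) (s : ℝ) : ℝ≥0∞ :=
  sInf {α : ℝ≥0∞ | μ {x | α < ENNReal.ofReal |f x|} ≤ ENNReal.ofReal s}

/-- The averaged (maximal) rearrangement `f**(s) = (1/s)∫_0^s f*(t) dt`. -/
def rearrStar [MeasurableSpace X] (μ : Measure X) (f : X → ℝ) (s : ℝ) : ℝ≥0∞ :=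
  (ENNReal.ofReal s)⁻¹ * ∫⁻ t in Set.Ioc (0 : ℝ) s, rearr μ f t

/-- The Lorentz functional built from a rearrangement-type function `R`:
`(∫_0^∞ (t^{1/p} R(t))^r dt/t)^{1/r}` for `r < ∞`, and `sup_{t>0} t^{1/p} R(t)`
for `r = ∞` (when `p = ∞`, `1/p` is interpreted as `0`, which for `R = f*`
recovers the essential supremum of `|f|`). -/
def lorentzNormOf (R : ℝ → ℝ≥0∞) (p r : ℝ≥0∞) : ℝ≥0∞ :=
  if r = ∞ then ⨆ t : {t : ℝ // 0 < t}, ENNReal.ofReal (t.1 ^ p.toReal⁻¹) * R t.1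
  else (∫⁻ t in Set.Ioi (0 : ℝ),
      (ENNReal.ofReal (t ^ p.toReal⁻¹) * R t) ^ r.toReal / ENNReal.ofReal t) ^ r.toReal⁻¹

/-- The Lorentz quasi-norm `‖f‖_{L^{p,r}}`. -/
def lorentzNorm [MeasurableSpace X] (μ : Measure X) (p r : ℝ≥0∞) (f : X → ℝ) : ℝ≥0∞ :=
  lorentzNormOf (rearr μ f) p r

/-- The Lorentz norm `‖f‖*_{L^{p,r}}`, with `f*` replaced by `f**`. -/
def lorentzNormStar [MeasurableSpace X] (μ : Measure X) (p r : ℝ≥0∞) (f : X → ℝ) : ℝ≥0∞ :=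
  lorentzNormOf (rearrStar μ f) p r

/-- The annuli `A_u`, `u ≥ -1`:  `A_{-1} = {x ∈ Ω : |x| < 1/2}` and, for `u ≥ 0`,
`A_u = {x ∈ Ω : 2^{u-1} ≤ |x| < 2^u}`. -/
def annulus [Norm X] (Ω : Set X) (u : ℤ) : Set X :=
  if u = -1 then {x ∈ Ω | ‖x‖ < 1 / 2}
  else {x ∈ Ω | (2 : ℝ) ^ (u - 1) ≤ ‖x‖ ∧ ‖x‖ < (2 : ℝ) ^ u}

/-- The Herz-type functional built from a functional `L` on the blocks:
`(Σ_{u ≥ -1} (2^{ua} L(f χ_{A_u}))^q)^{1/q}` for `q < ∞`, with the sup-modification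
for `q = ∞`. -/
def herzNormWith {E : Type*} [Norm X] [Zero E] (Ω : Set X) (a : ℝ) (q : ℝ≥0∞)
    (L : (X → E) → ℝ≥0∞) (f : X → E) : ℝ≥0∞ :=
  if q = ∞ then
    ⨆ u : {u : ℤ // -1 ≤ u},
      ENNReal.ofReal ((2 : ℝ) ^ ((u.1 : ℝ) * a)) * L ((annulus Ω u.1).indicator f)
  else (∑' u : {u : ℤ // -1 ≤ u},
      (ENNReal.ofReal ((2 : ℝ) ^ ((u.1 : ℝ) * a)) * L ((annulus Ω u.1).indicator f)) ^ q.toReal)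
      ^ q.toReal⁻¹

/-- The non-homogeneous Lorentz–Herz quasi-norm `‖f‖_{HL^{a,r}_{p,q}}`. -/
def herzNorm [MeasurableSpace X] [Norm X] (μ : Measure X) (Ω : Set X) (a : ℝ)
    (p q r : ℝ≥0∞) (f : X → ℝ) : ℝ≥0∞ :=
  herzNormWith Ω a q (lorentzNorm μ p r) f

/-- The non-homogeneous Lorentz–Herz norm `‖f‖*_{HL^{a,r}_{p,q}}`, built from the
Lorentz norms `‖·‖*_{L^{p,r}}`. -/
def herzNormStar [MeasurableSpace X] [Norm X] (μ : Measure X) (Ω : Set X) (a : ℝ)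
    (p q r : ℝ≥0∞) (f : X → ℝ) : ℝ≥0∞ :=
  herzNormWith Ω a q (lorentzNormStar μ p r) f

/-- The conjugate exponent: `1/p + 1/p' = 1`, with `1' = ∞` and `∞' = 1`. -/
def conjExp (p : ℝ≥0∞) : ℝ≥0∞ :=
  if p = 1 then ∞ else if p = ∞ then 1 else ENNReal.ofReal (p.toReal / (p.toReal - 1))

/-- The quantity `(Σ_{u≥-1} (2^{ua} μ(A_u ∩ E)^{1/p})^q)^{(of the summands)}`,
i.e. `Σ_{u≥-1} 2^{uaq} μ(A_u ∩ E)^{q/p}` for `q < ∞`, with the sup-modification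
for `q = ∞`. -/
def herzSetNorm [MeasurableSpace X] [Norm X] (μ : Measure X) (Ω : Set X) (a : ℝ)
    (p q : ℝ≥0∞) (E : Set X) : ℝ≥0∞ :=
  if q = ∞ then
    ⨆ u : {u : ℤ // -1 ≤ u},
      ENNReal.ofReal ((2 : ℝ) ^ ((u.1 : ℝ) * a)) * μ (annulus Ω u.1 ∩ E) ^ p.toReal⁻¹
  else ∑' u : {u : ℤ // -1 ≤ u},
      (ENNReal.ofReal ((2 : ℝ) ^ ((u.1 : ℝ) * a)) * μ (annulus Ω u.1 ∩ E) ^ p.toReal⁻¹) ^ q.toReal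

/-- The Peetre K-functional for the couple of quasi-normed function spaces
determined by the functionals `n₀`, `n₁`. -/
def Kfun [MeasurableSpace X] (n₀ n₁ : (X → ℝ) → ℝ≥0∞) (t : ℝ) (f : X → ℝ) : ℝ≥0∞ :=
  ⨅ (g : X → ℝ) (_ : Measurable g) (_ : Measurable (f - g)),
    n₀ g + ENNReal.ofReal t * n₁ (f - g)

/-- The real interpolation quasi-norm `‖f‖_{(X₀,X₁)_{θ,q}}`. -/
def interpNorm [MeasurableSpace X] (n₀ n₁ : (X → ℝ) → ℝ≥0∞) (θ : ℝ) (q : ℝ≥0∞)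
    (f : X → ℝ) : ℝ≥0∞ :=
  if q = ∞ then ⨆ t : {t : ℝ // 0 < t}, ENNReal.ofReal (t.1 ^ (-θ)) * Kfun n₀ n₁ t.1 f
  else (∫⁻ t in Set.Ioi (0 : ℝ),
      (ENNReal.ofReal (t ^ (-θ)) * Kfun n₀ n₁ t f) ^ q.toReal / ENNReal.ofReal t) ^ q.toReal⁻¹

/-- Membership in the sum `X₀ + X₁` of the couple determined by `n₀`, `n₁`. -/
def inSum [MeasurableSpace X] (n₀ n₁ : (X → ℝ) → ℝ≥0∞) (f : X → ℝ) : Prop :=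
  ∃ g : X → ℝ, Measurable g ∧ Measurable (f - g) ∧ n₀ g < ∞ ∧ n₁ (f - g) < ∞

end
abbrev Euc (N : ℕ) : Type := EuclideanSpace ℝ (Fin N)

open MeasureTheory ENNReal Set

/-!
(1) The maximal rearrangement of `χ_F` is at most `min 1 (μ F / t)`, whose Lorentz functional
is at most a constant multiple of `μ(F)^{1/p}` because `1 < p`. Applied to the blocks `A_u ∩ E`, this
bounds `‖χ_E‖*_{HL^{a,r}_{p,q}}` by a multiple of the `ℓ^q` norm of `2^{ua} μ(A_u ∩ E)^{1/p}`.

(2) Since `f** ≥ f*` and `f**` is nonincreasing, `‖f‖*_{L^{p,r}}` controls the weak norm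
`sup_t t^{1/p} f*(t)`, and the layer-cake formula turns the resulting distribution bound into
`∫_F |f| ≤ C μ(F)^{1/p'} ‖f‖*_{L^{p,r}}` for `μ(F) < ∞`. On `A_u ∩ E` we split
`μ(A_u ∩ E)^{1/p'} ‖f χ_{A_u}‖* = (2^{-ua} μ(A_u ∩ E)^{1/p'}) (2^{ua} ‖f χ_{A_u}‖*)` and sum over
`u` with Hölder's inequality in `ℓ^{q'} × ℓ^q`.
-/

lemma ENNReal.one_lt_toReal {p : ℝ≥0∞} (hp1 : 1 < p) (hp : p ≠ ∞) : 1 < p.toReal := by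
  simpa using (ENNReal.toReal_lt_toReal one_ne_top hp).2 hp1

section Rearrangement

variable {X : Type*} [MeasurableSpace X] {μ : Measure X} {f : X → ℝ}

lemma rearr_antitone : Antitone (rearr μ f) := fun _ _ hst =>
  sInf_le_sInf fun _ hα => hα.trans (ofReal_le_ofReal hst)

lemma rearr_le_of_measure_le {t : ℝ} {α : ℝ≥0∞}
    (h : μ {x | α < ENNReal.ofReal |f x|} ≤ ENNReal.ofReal t) : rearr μ f t ≤ α :=
  sInf_le h

lemma le_rearr_of_lt_measure {t : ℝ} {α : ℝ≥0∞}
    (h : ENNReal.ofReal t < μ {x | α < ENNReal.ofReal |f x|}) : α ≤ rearr μ f t :=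
  le_sInf fun _ hβ => le_of_not_gt fun hβα =>
    h.not_ge ((measure_mono fun _ hx => hβα.trans hx).trans hβ)

lemma ofReal_mul_rearr_le_setLIntegral (t : ℝ) :
    ENNReal.ofReal t * rearr μ f t ≤ ∫⁻ s in Ioc 0 t, rearr μ f s :=
  calc ENNReal.ofReal t * rearr μ f t = ∫⁻ _ in Ioc 0 t, rearr μ f t := by
        rw [setLIntegral_const, Real.volume_Ioc, sub_zero, mul_comm]
    _ ≤ _ := setLIntegral_mono' measurableSet_Ioc fun _ hs => rearr_antitone hs.2

lemma rearr_le_rearrStar {t : ℝ} (ht : 0 < t) : rearr μ f t ≤ rearrStar μ f t := by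
  rw [rearrStar, ← ENNReal.mul_le_iff_le_inv (ofReal_pos.2 ht).ne' ofReal_ne_top]
  exact ofReal_mul_rearr_le_setLIntegral t

lemma rearrStar_antitoneOn : AntitoneOn (rearrStar μ f) (Ioi 0) := by
  intro s (hs : 0 < s) t (ht : 0 < t) hst
  set I := fun u : ℝ => ∫⁻ y in Ioc 0 u, rearr μ f y
  have htail : ∫⁻ y in Ioc s t, rearr μ f y ≤ ENNReal.ofReal (t - s) * rearr μ f s :=
    calc ∫⁻ y in Ioc s t, rearr μ f y ≤ ∫⁻ _ in Ioc s t, rearr μ f s :=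
          setLIntegral_mono' measurableSet_Ioc fun _ hy => rearr_antitone hy.1.le
      _ = _ := by rw [setLIntegral_const, Real.volume_Ioc, mul_comm]
  -- the tail over `(s, t]` is at most `(t - s) f*(s) ≤ (t - s) I(s) / s`
  have hcross : ENNReal.ofReal s * I t ≤ ENNReal.ofReal t * I s := by
    calc ENNReal.ofReal s * I t
        = ENNReal.ofReal s * (I s + ∫⁻ y in Ioc s t, rearr μ f y) := by
          simp only [I]
          rw [← Ioc_union_Ioc_eq_Ioc hs.le hst,
            lintegral_union measurableSet_Ioc (Ioc_disjoint_Ioc_of_le le_rfl)]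
      _ ≤ ENNReal.ofReal s * I s + ENNReal.ofReal (t - s) * (ENNReal.ofReal s * rearr μ f s) := by
          rw [mul_add, mul_left_comm]
          gcongr
      _ ≤ ENNReal.ofReal s * I s + ENNReal.ofReal (t - s) * I s := by
          gcongr
          exact ofReal_mul_rearr_le_setLIntegral s
      _ = ENNReal.ofReal t * I s := by
          rw [← add_mul, ← ofReal_add hs.le (sub_nonneg.2 hst), add_sub_cancel]
  rw [rearrStar, rearrStar, ENNReal.inv_mul_le_iff (ofReal_pos.2 ht).ne' ofReal_ne_top,
    mul_left_comm, ← ENNReal.mul_le_iff_le_inv (ofReal_pos.2 hs).ne' ofReal_ne_top]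
  exact hcross

end Rearrangement

section LorentzNormOf

variable {R R' : ℝ → ℝ≥0∞} {p r : ℝ≥0∞}

lemma lorentzNormOf_mono (h : ∀ t, 0 < t → R t ≤ R' t) :
    lorentzNormOf R p r ≤ lorentzNormOf R' p r := by
  unfold lorentzNormOf
  split_ifs
  · exact iSup_mono fun t => mul_le_mul_right (h t.1 t.2) _
  · refine ENNReal.rpow_le_rpow (setLIntegral_mono' measurableSet_Ioi fun t ht => ?_)
      (by positivity)
    exact ENNReal.div_le_div_right
      (ENNReal.rpow_le_rpow (mul_le_mul_right (h t ht) _) (by positivity)) _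

lemma lorentzNormOf_zero (hr : r ≠ 0) : lorentzNormOf 0 p r = 0 := by
  unfold lorentzNormOf
  split_ifs with hrtop
  · simp
  · have hrt : 0 < r.toReal := toReal_pos hr hrtop
    simp [ENNReal.zero_rpow_of_pos hrt, ENNReal.zero_rpow_of_pos (inv_pos.2 hrt)]

lemma ofReal_rpow_mul_le_lorentzNormOf_top {t : ℝ} (ht : 0 < t) :
    ENNReal.ofReal (t ^ p.toReal⁻¹) * R t ≤ lorentzNormOf R p ∞ := by
  rw [lorentzNormOf, if_pos rfl]
  exact le_iSup (fun s : {s : ℝ // 0 < s} => ENNReal.ofReal (s.1 ^ p.toReal⁻¹) * R s.1) ⟨t, ht⟩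

lemma rpow_le_two_mul_setLIntegral (hR : AntitoneOn R (Ioi 0)) {e ρ t : ℝ} (he : 0 ≤ e)
    (hρ : 0 < ρ) (ht : 0 < t) :
    (ENNReal.ofReal ((t / 2) ^ e) * R t) ^ ρ
      ≤ 2 * ∫⁻ s in Ioi 0, (ENNReal.ofReal (s ^ e) * R s) ^ ρ / ENNReal.ofReal s := by
  set Y := ENNReal.ofReal ((t / 2) ^ e) * R t
  have ht2 : 0 < t / 2 := half_pos ht
  -- every point of `(t/2, t]` contributes at least `Y ^ ρ / t`, on a set of length `t/2`
  have hpt : ∀ s ∈ Ioc (t / 2) t,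
      Y ^ ρ / ENNReal.ofReal t ≤ (ENNReal.ofReal (s ^ e) * R s) ^ ρ / ENNReal.ofReal s := by
    intro s hs
    refine ENNReal.div_le_div (ENNReal.rpow_le_rpow (mul_le_mul' ?_ ?_) hρ.le)
      (ofReal_le_ofReal hs.2)
    · exact ofReal_le_ofReal (Real.rpow_le_rpow ht2.le hs.1.le he)
    · exact hR (ht2.trans hs.1) ht hs.2
  calc Y ^ ρ = 2 * (ENNReal.ofReal (t / 2) * (Y ^ ρ / ENNReal.ofReal t)) := by
        rw [ENNReal.ofReal_div_of_pos two_pos, ofReal_ofNat, ← mul_assoc,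
          ENNReal.mul_div_cancel two_ne_zero ofNat_ne_top,
          ENNReal.mul_div_cancel (ofReal_pos.2 ht).ne' ofReal_ne_top]
    _ = 2 * ∫⁻ _ in Ioc (t / 2) t, Y ^ ρ / ENNReal.ofReal t := by
        rw [setLIntegral_const, Real.volume_Ioc, _root_.sub_half]
        ring
    _ ≤ _ := mul_le_mul_right ((setLIntegral_mono' measurableSet_Ioc hpt).trans
        (lintegral_mono_set fun s hs => ht2.trans hs.1)) 2

lemma ofReal_rpow_mul_le_lorentzNormOf (hR : AntitoneOn R (Ioi 0)) (hr : r ≠ 0) {t : ℝ}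
    (ht : 0 < t) :
    ENNReal.ofReal (t ^ p.toReal⁻¹) * R t
      ≤ 2 ^ (p.toReal⁻¹ + r.toReal⁻¹) * lorentzNormOf R p r := by
  set ip := p.toReal⁻¹
  rcases eq_or_ne r ∞ with rfl | hrtop
  · calc ENNReal.ofReal (t ^ ip) * R t ≤ lorentzNormOf R p ∞ :=
          ofReal_rpow_mul_le_lorentzNormOf_top ht
      _ ≤ _ := le_mul_of_one_le_left' (by
          simpa using ENNReal.rpow_le_rpow_of_exponent_le one_le_two
            (by positivity : (0 : ℝ) ≤ ip + (∞ : ℝ≥0∞).toReal⁻¹))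
  have hrt : 0 < r.toReal := toReal_pos hr hrtop
  have hsplit : ENNReal.ofReal (t ^ ip) = 2 ^ ip * ENNReal.ofReal ((t / 2) ^ ip) := by
    rw [← ofReal_ofNat 2, ENNReal.ofReal_rpow_of_nonneg zero_le_two (by positivity),
      ← ENNReal.ofReal_mul (by positivity), ← Real.mul_rpow zero_le_two (half_pos ht).le,
      mul_div_cancel₀ _ two_ne_zero]
  calc ENNReal.ofReal (t ^ ip) * R t = 2 ^ ip * (ENNReal.ofReal ((t / 2) ^ ip) * R t) := by
        rw [hsplit, mul_assoc]
    _ ≤ 2 ^ ip * (2 * ∫⁻ s in Ioi 0,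
          (ENNReal.ofReal (s ^ ip) * R s) ^ r.toReal / ENNReal.ofReal s) ^ r.toReal⁻¹ := by
        gcongr
        exact (ENNReal.rpow_rpow_inv hrt.ne' _).symm.le.trans
          (by gcongr; exact rpow_le_two_mul_setLIntegral hR (by positivity) hrt ht)
    _ = 2 ^ (ip + r.toReal⁻¹) * lorentzNormOf R p r := by
        rw [lorentzNormOf, if_neg hrtop, ENNReal.mul_rpow_of_nonneg _ _ (by positivity),
          ← mul_assoc, ENNReal.rpow_add _ _ two_ne_zero ofNat_ne_top]

lemma lorentzNormOf_top_le (hR : AntitoneOn R (Ioi 0)) (hr : r ≠ 0) :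
    lorentzNormOf R p ∞ ≤ 2 ^ (p.toReal⁻¹ + r.toReal⁻¹) * lorentzNormOf R p r := by
  rw [lorentzNormOf, if_pos rfl]
  exact iSup_le fun t => ofReal_rpow_mul_le_lorentzNormOf hR hr t.2

end LorentzNormOf

lemma lintegral_Ioc_ofReal_rpow {b c : ℝ} (hb : -1 < b) (hc : 0 ≤ c) :
    ∫⁻ t in Ioc 0 c, ENNReal.ofReal (t ^ b) = ENNReal.ofReal (c ^ (b + 1) / (b + 1)) := by
  have hint : IntegrableOn (fun t : ℝ => t ^ b) (Ioc 0 c) :=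
    (intervalIntegrable_iff_integrableOn_Ioc_of_le hc).1
      (intervalIntegral.intervalIntegrable_rpow' hb)
  rw [← ofReal_integral_eq_lintegral_ofReal hint
    ((ae_restrict_iff' measurableSet_Ioc).2 (.of_forall fun t ht => Real.rpow_nonneg ht.1.le b)),
    ← intervalIntegral.integral_of_le hc, integral_rpow (Or.inl hb),
    Real.zero_rpow (by linarith), sub_zero]

lemma lintegral_Ioi_ofReal_rpow {b c : ℝ} (hb : b < -1) (hc : 0 < c) :
    ∫⁻ t in Ioi c, ENNReal.ofReal (t ^ b) = ENNReal.ofReal (c ^ (b + 1) / (-b - 1)) := by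
  rw [← ofReal_integral_eq_lintegral_ofReal (integrableOn_Ioi_rpow_of_lt hb hc)
    ((ae_restrict_iff' measurableSet_Ioi).2
      (.of_forall fun t ht => Real.rpow_nonneg (hc.trans ht).le b)),
    integral_Ioi_rpow_of_lt hb hc, neg_div, ← div_neg, neg_add']

lemma setLIntegral_Ioi_ofReal_div_rpow {w l P : ℝ} (hP : 1 < P) (hw : 0 ≤ w) (hl : 0 < l) :
    ∫⁻ t in Ioi l, (ENNReal.ofReal w / ENNReal.ofReal t) ^ P
      = ENNReal.ofReal (w ^ P * l ^ (-P + 1) / (P - 1)) := by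
  have hP0 : 0 < P := one_pos.trans hP
  calc ∫⁻ t in Ioi l, (ENNReal.ofReal w / ENNReal.ofReal t) ^ P
      = ∫⁻ t in Ioi l, ENNReal.ofReal (w ^ P) * ENNReal.ofReal (t ^ (-P)) := by
        refine setLIntegral_congr_fun measurableSet_Ioi fun t (ht : l < t) => ?_
        have ht0 := hl.trans ht
        rw [← ofReal_div_of_pos ht0, ofReal_rpow_of_nonneg (div_nonneg hw ht0.le) hP0.le,
          ← ofReal_mul (by positivity), Real.div_rpow hw ht0.le, Real.rpow_neg ht0.le,
          div_eq_mul_inv]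
    _ = _ := by
        rw [lintegral_const_mul _ (by fun_prop), lintegral_Ioi_ofReal_rpow (by linarith) hl,
          ← ofReal_mul (by positivity), neg_neg, mul_div_assoc]

lemma lintegral_min_ofReal_div_rpow_le {M w P : ℝ} (hP : 1 < P) (hM : 0 < M) (hw : 0 < w) :
    ∫⁻ t in Ioi 0, min (ENNReal.ofReal M) ((ENNReal.ofReal w / ENNReal.ofReal t) ^ P)
      ≤ ENNReal.ofReal (P / (P - 1)) * (ENNReal.ofReal M ^ (1 - P⁻¹) * ENNReal.ofReal w) := by
  have hP0 : 0 < P := one_pos.trans hP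
  have hP1 : 0 < P - 1 := sub_pos.2 hP
  -- the two bounds `M` and `(w / t) ^ P` of the integrand cross at `t = l`
  set l := w * M ^ (-P⁻¹)
  have hl : 0 < l := by positivity
  have hMl : M * l = M ^ (1 - P⁻¹) * w := by
    rw [sub_eq_add_neg, Real.rpow_add hM, Real.rpow_one]
    ring
  have hwl : w ^ P * l ^ (-P + 1) = M ^ (1 - P⁻¹) * w := by
    rw [Real.mul_rpow hw.le (by positivity), ← Real.rpow_mul hM.le,
      show -P⁻¹ * (-P + 1) = 1 - P⁻¹ by rw [mul_add, neg_mul_neg, inv_mul_cancel₀ hP0.ne']; ring,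
      ← mul_assoc, ← Real.rpow_add hw, show P + (-P + 1) = 1 by ring, Real.rpow_one, mul_comm]
  rw [← Ioc_union_Ioi_eq_Ioi hl.le, lintegral_union measurableSet_Ioi (Ioc_disjoint_Ioi le_rfl)]
  calc _ ≤ (∫⁻ _ in Ioc 0 l, ENNReal.ofReal M)
        + ∫⁻ t in Ioi l, (ENNReal.ofReal w / ENNReal.ofReal t) ^ P :=
        add_le_add (lintegral_mono fun _ => min_le_left _ _)
          (lintegral_mono fun _ => min_le_right _ _)
    _ = ENNReal.ofReal (M * l) + ENNReal.ofReal (w ^ P * l ^ (-P + 1) / (P - 1)) := by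
        rw [setLIntegral_Ioi_ofReal_div_rpow hP hw.le hl, setLIntegral_const, Real.volume_Ioc,
          sub_zero, ofReal_mul hM.le]
    _ = _ := by
        rw [hMl, hwl, ← ofReal_add (by positivity) (by positivity),
          ofReal_rpow_of_nonneg hM.le (by simp [inv_le_one_of_one_le₀ hP.le]),
          ← ofReal_mul (by positivity), ← ofReal_mul (by positivity)]
        congr 1
        field_simp
        ring

lemma lintegral_min_div_rpow_le {m W : ℝ≥0∞} {P : ℝ} (hP : 1 < P) (hm : m ≠ ∞) :
    ∫⁻ t in Ioi 0, min m ((W / ENNReal.ofReal t) ^ P)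
      ≤ ENNReal.ofReal (P / (P - 1)) * (m ^ (1 - P⁻¹) * W) := by
  have hP0 : 0 < P := one_pos.trans hP
  rcases eq_or_ne m 0 with rfl | hm0
  · simp
  rcases eq_or_ne W 0 with rfl | hW0
  · simp [ENNReal.zero_rpow_of_pos hP0]
  rcases eq_or_ne W ∞ with rfl | hW
  · rw [ENNReal.mul_top (by simp [hm0, hm]),
      ENNReal.mul_top (by simpa using div_pos hP0 (sub_pos.2 hP))]
    exact le_top
  rw [← ofReal_toReal hm, ← ofReal_toReal hW]
  exact lintegral_min_ofReal_div_rpow_le hP (toReal_pos hm0 hm) (toReal_pos hW0 hW)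

section LorentzNorm

variable {X : Type*} [MeasurableSpace X] {μ : Measure X} {p r : ℝ≥0∞} {g : X → ℝ}

lemma lorentzNorm_le_lorentzNormStar : lorentzNorm μ p r g ≤ lorentzNormStar μ p r g :=
  lorentzNormOf_mono fun _ ht => rearr_le_rearrStar ht

lemma lorentzNormStar_top_le (hr : r ≠ 0) :
    lorentzNormStar μ p ∞ g ≤ 2 ^ (p.toReal⁻¹ + r.toReal⁻¹) * lorentzNormStar μ p r g :=
  lorentzNormOf_top_le rearrStar_antitoneOn hr

lemma measure_lt_abs_le_lorentzNorm_top (hp0 : p ≠ 0) (hp : p ≠ ∞) {l : ℝ} (hl : 0 < l) :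
    μ {x | ENNReal.ofReal l < ENNReal.ofReal |g x|}
      ≤ (lorentzNorm μ p ∞ g / ENNReal.ofReal l) ^ p.toReal := by
  have hP : 0 < p.toReal := toReal_pos hp0 hp
  by_contra! hlt
  obtain ⟨s, -, hWs, hsμ⟩ := ENNReal.lt_iff_exists_real_btwn.1 hlt
  have hs : 0 < s := ofReal_pos.1 (zero_le.trans_lt hWs)
  have hle : ENNReal.ofReal (s ^ p.toReal⁻¹) * ENNReal.ofReal l ≤ lorentzNorm μ p ∞ g :=
    (mul_le_mul_right (le_rearr_of_lt_measure hsμ) _).trans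
      (ofReal_rpow_mul_le_lorentzNormOf_top hs)
  have hlt' : lorentzNorm μ p ∞ g / ENNReal.ofReal l < ENNReal.ofReal (s ^ p.toReal⁻¹) := by
    have := ENNReal.rpow_lt_rpow hWs (inv_pos.2 hP)
    rwa [← ENNReal.rpow_mul, mul_inv_cancel₀ hP.ne', ENNReal.rpow_one,
      ofReal_rpow_of_pos hs] at this
  exact hle.not_gt
    ((ENNReal.div_lt_iff (.inl (ofReal_pos.2 hl).ne') (.inl ofReal_ne_top)).1 hlt')

theorem setLIntegral_le_lorentzNormStar (hp1 : 1 < p) (hp : p ≠ ∞) (hr : r ≠ 0)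
    (hg : AEMeasurable g μ) {F : Set X} (hF : μ F ≠ ∞) :
    ∫⁻ x in F, ENNReal.ofReal |g x| ∂μ
      ≤ ENNReal.ofReal (p.toReal / (p.toReal - 1)) * 2 ^ (p.toReal⁻¹ + r.toReal⁻¹)
        * (μ F ^ (1 - p.toReal⁻¹) * lorentzNormStar μ p r g) := by
  set W := lorentzNorm μ p ∞ g
  have hdist : ∀ t ∈ Ioi (0 : ℝ),
      μ.restrict F {x | t < |g x|} ≤ min (μ F) ((W / ENNReal.ofReal t) ^ p.toReal) := by
    intro t (ht : 0 < t)
    refine le_min ((measure_mono (subset_univ _)).trans_eq (Measure.restrict_apply_univ F)) ?_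
    refine (Measure.restrict_le_self _).trans (le_of_eq_of_le ?_
      (measure_lt_abs_le_lorentzNorm_top (zero_lt_one.trans hp1).ne' hp ht))
    congr 1
    ext x
    exact (ofReal_lt_ofReal_iff_of_nonneg ht.le).symm
  calc ∫⁻ x in F, ENNReal.ofReal |g x| ∂μ
      = ∫⁻ t in Ioi 0, μ.restrict F {x | t < |g x|} :=
        lintegral_eq_lintegral_meas_lt _ (.of_forall fun x => abs_nonneg (g x)) hg.restrict.abs
    _ ≤ ∫⁻ t in Ioi 0, min (μ F) ((W / ENNReal.ofReal t) ^ p.toReal) :=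
        setLIntegral_mono' measurableSet_Ioi hdist
    _ ≤ ENNReal.ofReal (p.toReal / (p.toReal - 1)) * (μ F ^ (1 - p.toReal⁻¹) * W) :=
        lintegral_min_div_rpow_le (ENNReal.one_lt_toReal hp1 hp) hF
    _ ≤ ENNReal.ofReal (p.toReal / (p.toReal - 1)) * (μ F ^ (1 - p.toReal⁻¹)
          * (2 ^ (p.toReal⁻¹ + r.toReal⁻¹) * lorentzNormStar μ p r g)) := by
        gcongr
        exact lorentzNorm_le_lorentzNormStar.trans (lorentzNormStar_top_le hr)
    _ = _ := by ring

end LorentzNorm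

section Profile

lemma ofReal_rpow_mul_min_one_div {e M t : ℝ} (ht : 0 < t) :
    ENNReal.ofReal (t ^ e) * min 1 (ENNReal.ofReal M / ENNReal.ofReal t)
      = ENNReal.ofReal (t ^ e * min 1 (M / t)) := by
  rw [← ofReal_div_of_pos ht, ← ofReal_one, ← ofReal_min,
    ← ofReal_mul (Real.rpow_nonneg ht.le e)]

lemma rpow_mul_min_one_div_le_mul_rpow_sub_one {e M t : ℝ} (ht : 0 < t) :
    t ^ e * min 1 (M / t) ≤ M * t ^ (e - 1) := by
  calc t ^ e * min 1 (M / t) ≤ t ^ e * (M / t) := by gcongr; exact min_le_right _ _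
    _ = M * t ^ (e - 1) := by rw [Real.rpow_sub_one ht.ne']; ring

lemma rpow_mul_min_one_div_le_rpow {e M t : ℝ} (he0 : 0 ≤ e) (he1 : e ≤ 1) (hM : 0 ≤ M)
    (ht : 0 < t) : t ^ e * min 1 (M / t) ≤ M ^ e := by
  rcases le_or_gt t M with htM | hMt
  · calc t ^ e * min 1 (M / t) ≤ t ^ e := mul_le_of_le_one_right (by positivity) (min_le_left _ _)
      _ ≤ M ^ e := Real.rpow_le_rpow ht.le htM he0
  refine (rpow_mul_min_one_div_le_mul_rpow_sub_one ht).trans ?_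
  rcases hM.eq_or_lt with rfl | hM
  · simpa using Real.rpow_nonneg le_rfl e
  calc M * t ^ (e - 1) ≤ M * M ^ (e - 1) :=
        mul_le_mul_of_nonneg_left (Real.rpow_le_rpow_of_nonpos hM hMt.le (by linarith)) hM.le
    _ = M ^ e := by rw [Real.rpow_sub_one hM.ne']; field_simp

variable {p r : ℝ≥0∞}

lemma lorentzNormOf_min_one_div_top_le (hp1 : 1 ≤ p) (hp : p ≠ ∞) {M : ℝ} (hM : 0 ≤ M) :
    lorentzNormOf (fun t => min 1 (ENNReal.ofReal M / ENNReal.ofReal t)) p ∞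
      ≤ ENNReal.ofReal (M ^ p.toReal⁻¹) := by
  have hP : 1 ≤ p.toReal := by simpa using (ENNReal.toReal_le_toReal one_ne_top hp).2 hp1
  rw [lorentzNormOf, if_pos rfl]
  refine iSup_le fun t => ?_
  rw [ofReal_rpow_mul_min_one_div t.2]
  exact ofReal_le_ofReal (rpow_mul_min_one_div_le_rpow (by positivity)
    (inv_le_one_of_one_le₀ hP) hM t.2)

lemma setLIntegral_rpow_mul_min_one_div_le {e ρ M : ℝ} (he : 0 < e) (he1 : e < 1) (hρ : 0 < ρ)
    (hM : 0 < M) :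
    ∫⁻ t in Ioi 0, ENNReal.ofReal ((t ^ e * min 1 (M / t)) ^ ρ / t)
      ≤ ENNReal.ofReal (M ^ (e * ρ) * ((e * ρ)⁻¹ + ((1 - e) * ρ)⁻¹)) := by
  have he1' : 0 < 1 - e := sub_pos.2 he1
  have hhead : ∀ t ∈ Ioc 0 M,
      ENNReal.ofReal ((t ^ e * min 1 (M / t)) ^ ρ / t) ≤ ENNReal.ofReal (t ^ (e * ρ - 1)) := by
    rintro t ⟨ht, -⟩
    rw [Real.rpow_sub_one ht.ne', Real.rpow_mul ht.le]
    gcongr ENNReal.ofReal (?_ ^ _ / _)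
    exact mul_le_of_le_one_right (by positivity) (min_le_left _ _)
  have htail : ∀ t ∈ Ioi M, ENNReal.ofReal ((t ^ e * min 1 (M / t)) ^ ρ / t)
      ≤ ENNReal.ofReal (M ^ ρ) * ENNReal.ofReal (t ^ ((e - 1) * ρ - 1)) := by
    intro t (ht : M < t)
    have ht0 := hM.trans ht
    rw [← ofReal_mul (by positivity), Real.rpow_sub_one ht0.ne', Real.rpow_mul ht0.le,
      mul_div_assoc', ← Real.mul_rpow hM.le (by positivity)]
    gcongr ENNReal.ofReal (?_ ^ _ / _)
    exact rpow_mul_min_one_div_le_mul_rpow_sub_one ht0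
  rw [← Ioc_union_Ioi_eq_Ioi hM.le, lintegral_union measurableSet_Ioi (Ioc_disjoint_Ioi le_rfl)]
  calc _ ≤ (∫⁻ t in Ioc 0 M, ENNReal.ofReal (t ^ (e * ρ - 1)))
        + ∫⁻ t in Ioi M, ENNReal.ofReal (M ^ ρ) * ENNReal.ofReal (t ^ ((e - 1) * ρ - 1)) :=
        add_le_add (setLIntegral_mono' measurableSet_Ioc hhead)
          (setLIntegral_mono' measurableSet_Ioi htail)
    _ = ENNReal.ofReal (M ^ (e * ρ) / (e * ρ))
        + ENNReal.ofReal (M ^ ρ) * ENNReal.ofReal (M ^ ((e - 1) * ρ) / ((1 - e) * ρ)) := by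
        rw [lintegral_Ioc_ofReal_rpow (by nlinarith) hM.le, lintegral_const_mul _ (by fun_prop),
          lintegral_Ioi_ofReal_rpow (by nlinarith) hM, sub_add_cancel, sub_add_cancel]
        congr 4
        ring
    _ = _ := by
        rw [← ofReal_mul (by positivity), mul_div_assoc', ← Real.rpow_add hM,
          ← ofReal_add (by positivity) (by positivity)]
        congr 1
        ring_nf

lemma lorentzNormOf_min_one_div_le (hp1 : 1 < p) (hp : p ≠ ∞) (hr : r ≠ 0) (hr' : r ≠ ∞)
    {M : ℝ} (hM : 0 < M) :
    lorentzNormOf (fun t => min 1 (ENNReal.ofReal M / ENNReal.ofReal t)) p r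
      ≤ ENNReal.ofReal (((p.toReal⁻¹ * r.toReal)⁻¹ + ((1 - p.toReal⁻¹) * r.toReal)⁻¹)
          ^ r.toReal⁻¹) * ENNReal.ofReal (M ^ p.toReal⁻¹) := by
  set ip := p.toReal⁻¹
  set ρ := r.toReal
  have hP := ENNReal.one_lt_toReal hp1 hp
  have hip : 0 < ip := inv_pos.2 (zero_lt_one.trans hP)
  have hip1 : 0 < 1 - ip := sub_pos.2 (inv_lt_one_of_one_lt₀ hP)
  have hρ : 0 < ρ := toReal_pos hr hr'
  have hint : ∀ t ∈ Ioi (0 : ℝ),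
      (ENNReal.ofReal (t ^ ip) * min 1 (ENNReal.ofReal M / ENNReal.ofReal t)) ^ ρ
        / ENNReal.ofReal t = ENNReal.ofReal ((t ^ ip * min 1 (M / t)) ^ ρ / t) := by
    intro t (ht : 0 < t)
    rw [ofReal_rpow_mul_min_one_div ht, ofReal_div_of_pos ht, ofReal_rpow_of_nonneg
      (by positivity) hρ.le]
  calc lorentzNormOf (fun t => min 1 (ENNReal.ofReal M / ENNReal.ofReal t)) p r
      = (∫⁻ t in Ioi 0, ENNReal.ofReal ((t ^ ip * min 1 (M / t)) ^ ρ / t)) ^ ρ⁻¹ := by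
        rw [lorentzNormOf, if_neg hr', setLIntegral_congr_fun measurableSet_Ioi hint]
    _ ≤ ENNReal.ofReal (M ^ (ip * ρ) * ((ip * ρ)⁻¹ + ((1 - ip) * ρ)⁻¹)) ^ ρ⁻¹ := by
        gcongr
        exact setLIntegral_rpow_mul_min_one_div_le hip (sub_pos.1 hip1) hρ hM
    _ = _ := by
        rw [ofReal_rpow_of_nonneg (by positivity) (by positivity),
          Real.mul_rpow (by positivity) (by positivity), ← Real.rpow_mul hM.le,
          mul_inv_cancel_right₀ hρ.ne', ofReal_mul (by positivity), mul_comm]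

lemma exists_lorentzNormOf_min_one_div_le (hp1 : 1 < p) (hp : p ≠ ∞) (hr : r ≠ 0) :
    ∃ C : ℝ≥0∞, C ≠ ∞ ∧ ∀ M : ℝ, 0 ≤ M →
      lorentzNormOf (fun t => min 1 (ENNReal.ofReal M / ENNReal.ofReal t)) p r
        ≤ C * ENNReal.ofReal (M ^ p.toReal⁻¹) := by
  rcases eq_or_ne r ∞ with rfl | hr'
  · exact ⟨1, one_ne_top, fun M hM => by
      simpa using lorentzNormOf_min_one_div_top_le hp1.le hp hM⟩
  refine ⟨ENNReal.ofReal (((p.toReal⁻¹ * r.toReal)⁻¹ + ((1 - p.toReal⁻¹) * r.toReal)⁻¹)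
    ^ r.toReal⁻¹), ofReal_ne_top, fun M hM => ?_⟩
  rcases hM.eq_or_lt with rfl | hM
  · calc _ ≤ lorentzNormOf 0 p r := lorentzNormOf_mono fun t _ => by simp
      _ = 0 := lorentzNormOf_zero hr
      _ ≤ _ := zero_le
  exact lorentzNormOf_min_one_div_le hp1 hp hr hr' hM

end Profile

section Indicator

variable {X : Type*} [MeasurableSpace X] {μ : Measure X} {F : Set X}

lemma rearr_indicator_le_one (t : ℝ) : rearr μ (F.indicator fun _ => (1 : ℝ)) t ≤ 1 := by
  refine rearr_le_of_measure_le ?_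
  have hempty : {x | 1 < ENNReal.ofReal |F.indicator (fun _ => (1 : ℝ)) x|} = ∅ :=
    eq_empty_of_forall_notMem fun x => by by_cases hx : x ∈ F <;> simp [hx]
  rw [hempty, measure_empty]
  exact zero_le

lemma rearr_indicator_eq_zero {t : ℝ} (ht : μ F ≤ ENNReal.ofReal t) :
    rearr μ (F.indicator fun _ => (1 : ℝ)) t = 0 :=
  nonpos_iff_eq_zero.1 <| rearr_le_of_measure_le <| (measure_mono fun x hx => by
    by_contra hxF
    simp [hxF] at hx).trans ht

lemma setLIntegral_rearr_indicator_le (t : ℝ) :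
    ∫⁻ s in Ioc 0 t, rearr μ (F.indicator fun _ => (1 : ℝ)) s ≤ min (ENNReal.ofReal t) (μ F) := by
  have hle_one : ∫⁻ s in Ioc 0 t, rearr μ (F.indicator fun _ => (1 : ℝ)) s ≤ ENNReal.ofReal t :=
    calc _ ≤ ∫⁻ _ in Ioc 0 t, 1 := lintegral_mono fun s => rearr_indicator_le_one s
      _ = ENNReal.ofReal t := by simp
  refine le_min hle_one ?_
  rcases eq_or_ne (μ F) ∞ with hF | hF
  · exact hF ▸ le_top
  -- `f*` of an indicator is at most the indicator of `(0, μ F)`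
  calc _ ≤ ∫⁻ s in Ioc 0 t, (Ioo 0 (μ F).toReal).indicator 1 s := by
        refine setLIntegral_mono' measurableSet_Ioc fun s hs => ?_
        by_cases hsF : s < (μ F).toReal
        · simpa [indicator_of_mem (show s ∈ Ioo 0 (μ F).toReal from ⟨hs.1, hsF⟩)]
            using rearr_indicator_le_one s
        · rw [rearr_indicator_eq_zero ((ofReal_toReal hF).symm.le.trans
            (ofReal_le_ofReal (not_lt.1 hsF)))]
          exact zero_le
    _ ≤ ∫⁻ s, (Ioo 0 (μ F).toReal).indicator 1 s := setLIntegral_le_lintegral _ _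
    _ = μ F := by simp [lintegral_indicator measurableSet_Ioo, ofReal_toReal hF]

lemma rearrStar_indicator_le {t : ℝ} (ht : 0 < t) :
    rearrStar μ (F.indicator fun _ => (1 : ℝ)) t ≤ min 1 (μ F / ENNReal.ofReal t) := by
  have h := setLIntegral_rearr_indicator_le (μ := μ) (F := F) t
  refine le_min ?_ ?_
  · calc _ ≤ (ENNReal.ofReal t)⁻¹ * ENNReal.ofReal t :=
          mul_le_mul_right (h.trans (min_le_left _ _)) _
      _ = 1 := ENNReal.inv_mul_cancel (ofReal_pos.2 ht).ne' ofReal_ne_top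
  · calc _ ≤ (ENNReal.ofReal t)⁻¹ * μ F := mul_le_mul_right (h.trans (min_le_right _ _)) _
      _ = μ F / ENNReal.ofReal t := by rw [div_eq_mul_inv, mul_comm]

theorem exists_lorentzNormStar_indicator_le {p r : ℝ≥0∞} (hp1 : 1 < p) (hp : p ≠ ∞) (hr : r ≠ 0) :
    ∃ C : ℝ≥0∞, C ≠ ∞ ∧ ∀ F : Set X, μ F ≠ ∞ →
      lorentzNormStar μ p r (F.indicator fun _ => (1 : ℝ)) ≤ C * μ F ^ p.toReal⁻¹ := by
  obtain ⟨C, hC, hprofile⟩ := exists_lorentzNormOf_min_one_div_le hp1 hp hr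
  refine ⟨C, hC, fun F hF => ?_⟩
  calc lorentzNormStar μ p r (F.indicator fun _ => (1 : ℝ))
      ≤ lorentzNormOf (fun t => min 1 (μ F / ENNReal.ofReal t)) p r :=
        lorentzNormOf_mono fun t ht => rearrStar_indicator_le ht
    _ ≤ C * μ F ^ p.toReal⁻¹ := by
        have h := hprofile (μ F).toReal toReal_nonneg
        rwa [← ofReal_rpow_of_nonneg toReal_nonneg (inv_nonneg.2 toReal_nonneg),
          ofReal_toReal hF] at h

end Indicator

section Annulus

variable {X : Type*} [Norm X] {Ω : Set X}

lemma annulus_subset (u : ℤ) : annulus Ω u ⊆ Ω := by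
  unfold annulus
  split_ifs <;> exact sep_subset _ _

lemma norm_lt_of_mem_annulus {u : ℤ} {x : X} (hx : x ∈ annulus Ω u) : ‖x‖ < 2 ^ u := by
  unfold annulus at hx
  split_ifs at hx with hu
  · simpa [hu] using hx.2
  · exact hx.2.2

lemma pairwise_disjoint_annulus :
    Pairwise fun u v : {u : ℤ // -1 ≤ u} => Disjoint (annulus Ω u) (annulus Ω v) := by
  suffices h : ∀ u v : ℤ, u < v → -1 ≤ u → Disjoint (annulus Ω u) (annulus Ω v) by
    intro u v huv
    rcases lt_or_gt_of_ne (Subtype.coe_ne_coe.2 huv) with h' | h'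
    · exact h _ _ h' u.2
    · exact (h _ _ h' v.2).symm
  intro u v huv hu
  refine disjoint_left.2 fun x hxu hxv => ?_
  rw [annulus, if_neg (by omega)] at hxv
  have : (2 : ℝ) ^ u ≤ 2 ^ (v - 1) := zpow_le_zpow_right₀ one_le_two (by omega)
  exact (norm_lt_of_mem_annulus hxu).not_ge (this.trans hxv.2.1)

lemma iUnion_annulus : ⋃ u : {u : ℤ // -1 ≤ u}, annulus Ω u = Ω := by
  refine (iUnion_subset fun u : {u : ℤ // -1 ≤ u} => annulus_subset (Ω := Ω) u.1).antisymm
    fun x hx => ?_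
  by_cases hsmall : ‖x‖ < 1 / 2
  · exact mem_iUnion.2 ⟨⟨-1, le_rfl⟩, by simpa [annulus, hx] using hsmall⟩
  obtain ⟨n, hn⟩ := exists_mem_Ico_zpow (lt_of_lt_of_le (by norm_num) (not_lt.1 hsmall)) one_lt_two
  have hn0 : 0 ≤ n + 1 := by
    by_contra! h
    have : (2 : ℝ) ^ (n + 1) ≤ 2 ^ (-1 : ℤ) := zpow_le_zpow_right₀ one_le_two (by omega)
    norm_num at this
    linarith [hn.2]
  refine mem_iUnion.2 ⟨⟨n + 1, by omega⟩, ?_⟩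
  show x ∈ annulus Ω (n + 1)
  rw [annulus, if_neg (by omega), add_sub_cancel_right]
  exact ⟨hx, hn⟩

end Annulus

section MeasurableAnnulus

variable {X : Type*} [NormedAddCommGroup X] [MeasurableSpace X] [OpensMeasurableSpace X]
  {Ω : Set X}

lemma MeasurableSet.annulus (hΩ : MeasurableSet Ω) (u : ℤ) : MeasurableSet (annulus Ω u) := by
  unfold _root_.annulus
  split_ifs
  · exact hΩ.inter (measurableSet_lt measurable_norm measurable_const)
  · exact hΩ.inter ((measurableSet_le measurable_const measurable_norm).inter
      (measurableSet_lt measurable_norm measurable_const))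

lemma setLIntegral_eq_tsum_annulus_inter {μ : Measure X} {E : Set X} (hΩ : MeasurableSet Ω)
    (hE : MeasurableSet E) (hEΩ : E ⊆ Ω) (h : X → ℝ≥0∞) :
    ∫⁻ x in E, h x ∂μ = ∑' u : {u : ℤ // -1 ≤ u}, ∫⁻ x in annulus Ω u ∩ E, h x ∂μ := by
  conv_lhs => rw [← inter_eq_right.2 hEΩ, ← iUnion_annulus (Ω := Ω), iUnion_inter]
  exact lintegral_iUnion (fun u : {u : ℤ // -1 ≤ u} => (hΩ.annulus u).inter hE)
    (fun _ _ huv => (pairwise_disjoint_annulus huv).mono inter_subset_left inter_subset_left) h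

end MeasurableAnnulus

section ConjExp

variable {p : ℝ≥0∞}

@[simp] lemma conjExp_one : conjExp 1 = ∞ := if_pos rfl

@[simp] lemma conjExp_top : conjExp ∞ = 1 := by simp [conjExp]

lemma conjExp_ne_top (hp1 : 1 < p) : conjExp p ≠ ∞ := by
  unfold conjExp
  split_ifs <;> simp_all

lemma conjExp_toReal_inv (hp1 : 1 < p) (hp : p ≠ ∞) : (conjExp p).toReal⁻¹ = 1 - p.toReal⁻¹ := by
  have hP := ENNReal.one_lt_toReal hp1 hp
  rw [conjExp, if_neg hp1.ne', if_neg hp, toReal_ofReal (div_nonneg (by linarith) (by linarith)),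
    inv_div, sub_div, div_self (by linarith), one_div]

lemma holderConjugate_toReal_conjExp (hp1 : 1 < p) (hp : p ≠ ∞) :
    (conjExp p).toReal.HolderConjugate p.toReal := by
  have hP := ENNReal.one_lt_toReal hp1 hp
  rw [conjExp, if_neg hp1.ne', if_neg hp, toReal_ofReal (div_nonneg (by linarith) (by linarith))]
  exact (Real.HolderConjugate.conjExponent hP).symm

end ConjExp

noncomputable def seqNorm {ι : Type*} (q : ℝ≥0∞) (x : ι → ℝ≥0∞) : ℝ≥0∞ :=
  if q = ∞ then ⨆ i, x i else (∑' i, x i ^ q.toReal) ^ q.toReal⁻¹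

section SeqNorm

variable {ι : Type*} {q : ℝ≥0∞} {x y : ι → ℝ≥0∞}

@[simp] lemma seqNorm_top : seqNorm ∞ x = ⨆ i, x i := if_pos rfl

@[simp] lemma seqNorm_one : seqNorm 1 x = ∑' i, x i := by simp [seqNorm]

lemma seqNorm_of_ne_top (hq : q ≠ ∞) : seqNorm q x = (∑' i, x i ^ q.toReal) ^ q.toReal⁻¹ :=
  if_neg hq

lemma seqNorm_mono (h : ∀ i, x i ≤ y i) : seqNorm q x ≤ seqNorm q y := by
  unfold seqNorm
  split_ifs
  · exact iSup_mono h
  · gcongr with i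
    exact h i

lemma seqNorm_const_mul (hq : q ≠ 0) (c : ℝ≥0∞) :
    seqNorm q (fun i => c * x i) = c * seqNorm q x := by
  unfold seqNorm
  split_ifs with hqtop
  · exact (ENNReal.mul_iSup ..).symm
  · have hq' : 0 < q.toReal := toReal_pos hq hqtop
    simp_rw [ENNReal.mul_rpow_of_nonneg _ _ hq'.le, ENNReal.tsum_mul_left,
      ENNReal.mul_rpow_of_nonneg _ _ (inv_nonneg.2 hq'.le), ENNReal.rpow_rpow_inv hq'.ne']

theorem tsum_mul_le_seqNorm_conjExp_mul_seqNorm [Countable ι] (hq : 1 ≤ q) (x y : ι → ℝ≥0∞) :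
    ∑' i, x i * y i ≤ seqNorm (conjExp q) x * seqNorm q y := by
  rcases eq_or_ne q 1 with rfl | hq1
  · rw [conjExp_one, seqNorm_top, seqNorm_one, ← ENNReal.tsum_mul_left]
    exact ENNReal.tsum_le_tsum fun i => mul_le_mul_left (le_iSup x i) _
  rcases eq_or_ne q ∞ with rfl | hqtop
  · rw [conjExp_top, seqNorm_top, seqNorm_one, ← ENNReal.tsum_mul_right]
    exact ENNReal.tsum_le_tsum fun i => mul_le_mul_right (le_iSup y i) _
  let _ : MeasurableSpace ι := ⊤
  have : MeasurableSingletonClass ι := ⟨fun _ => trivial⟩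
  have hq1' : 1 < q := lt_of_le_of_ne hq (Ne.symm hq1)
  have h := ENNReal.lintegral_mul_le_Lp_mul_Lq Measure.count
    (holderConjugate_toReal_conjExp hq1' hqtop)
    (measurable_from_top (f := x)).aemeasurable (measurable_from_top (f := y)).aemeasurable
  simpa only [lintegral_count, Pi.mul_apply, one_div, ← seqNorm_of_ne_top hqtop,
    ← seqNorm_of_ne_top (conjExp_ne_top hq1')] using h

end SeqNorm

lemma ofReal_two_rpow_mul_neg_mul_ofReal_two_rpow (s a : ℝ) :
    ENNReal.ofReal (2 ^ (s * -a)) * ENNReal.ofReal (2 ^ (s * a)) = 1 := by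
  rw [← ofReal_mul (by positivity), ← Real.rpow_add two_pos, mul_neg, neg_add_cancel,
    Real.rpow_zero, ofReal_one]

section Herz

variable {X : Type*} [Norm X] [MeasurableSpace X] {μ : Measure X} {Ω E : Set X} {a : ℝ}
  {p q r : ℝ≥0∞}

lemma herzNormStar_eq_seqNorm (f : X → ℝ) :
    herzNormStar μ Ω a p q r f = seqNorm q fun u : {u : ℤ // -1 ≤ u} =>
      ENNReal.ofReal (2 ^ ((u : ℝ) * a)) * lorentzNormStar μ p r ((annulus Ω u).indicator f) :=
  rfl

lemma seqNorm_lt_top_of_herzSetNorm_lt_top (h : herzSetNorm μ Ω a p q E < ∞) :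
    seqNorm q (fun u : {u : ℤ // -1 ≤ u} =>
      ENNReal.ofReal (2 ^ ((u : ℝ) * a)) * μ (annulus Ω u ∩ E) ^ p.toReal⁻¹) < ∞ := by
  unfold herzSetNorm at h
  unfold seqNorm
  split_ifs at h ⊢
  · exact h
  · exact rpow_lt_top_of_nonneg (inv_nonneg.2 toReal_nonneg) h.ne

theorem exists_herzNormStar_indicator_le (hp1 : 1 < p) (hp : p ≠ ∞) (hq : q ≠ 0) (hr : r ≠ 0) :
    ∃ C : ℝ≥0∞, C ≠ ∞ ∧ ∀ E : Set X, μ E ≠ ∞ →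
      herzNormStar μ Ω a p q r (E.indicator fun _ => (1 : ℝ))
        ≤ C * seqNorm q (fun u : {u : ℤ // -1 ≤ u} =>
          ENNReal.ofReal (2 ^ ((u : ℝ) * a)) * μ (annulus Ω u ∩ E) ^ p.toReal⁻¹) := by
  obtain ⟨C, hC, hind⟩ := exists_lorentzNormStar_indicator_le (μ := μ) hp1 hp hr
  refine ⟨C, hC, fun E hE => ?_⟩
  rw [herzNormStar_eq_seqNorm, ← seqNorm_const_mul hq]
  refine seqNorm_mono fun u => ?_
  rw [indicator_indicator, mul_left_comm]
  exact mul_le_mul_right (hind _ (measure_mono inter_subset_right |>.trans_lt hE.lt_top).ne) _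

end Herz

section HerzDuality

variable {X : Type*} [NormedAddCommGroup X] [MeasurableSpace X] [OpensMeasurableSpace X]
  {μ : Measure X} {Ω : Set X} {a : ℝ} {p q r : ℝ≥0∞}

theorem exists_setLIntegral_le_herzNormStar (hΩ : MeasurableSet Ω) (hp1 : 1 < p) (hp : p ≠ ∞)
    (hq : 1 ≤ q) (hr : r ≠ 0) :
    ∃ C : ℝ≥0∞, C ≠ ∞ ∧ ∀ E : Set X, MeasurableSet E → E ⊆ Ω → μ E ≠ ∞ →
      ∀ f : X → ℝ, AEMeasurable f μ →
        ∫⁻ x in E, ENNReal.ofReal |f x| ∂μ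
          ≤ C * seqNorm (conjExp q) (fun u : {u : ℤ // -1 ≤ u} =>
            ENNReal.ofReal (2 ^ ((u : ℝ) * -a)) * μ (annulus Ω u ∩ E) ^ (conjExp p).toReal⁻¹)
          * herzNormStar μ Ω a p q r f := by
  obtain ⟨C, hC, hlorentz⟩ : ∃ C : ℝ≥0∞, C ≠ ∞ ∧ ∀ (g : X → ℝ) (F : Set X), AEMeasurable g μ →
      μ F ≠ ∞ → ∫⁻ x in F, ENNReal.ofReal |g x| ∂μ
        ≤ C * (μ F ^ (1 - p.toReal⁻¹) * lorentzNormStar μ p r g) :=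
    ⟨_, mul_ne_top ofReal_ne_top (rpow_ne_top_of_nonneg (by positivity) ofNat_ne_top),
      fun g F hg hF => setLIntegral_le_lorentzNormStar hp1 hp hr hg hF⟩
  refine ⟨C, hC, fun E hE hEΩ hEfin f hf => ?_⟩
  have hblock : ∀ u : {u : ℤ // -1 ≤ u}, ∫⁻ x in annulus Ω u ∩ E, ENNReal.ofReal |f x| ∂μ
      ≤ C * ((ENNReal.ofReal (2 ^ ((u : ℝ) * -a)) * μ (annulus Ω u ∩ E) ^ (conjExp p).toReal⁻¹)
        * (ENNReal.ofReal (2 ^ ((u : ℝ) * a))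
          * lorentzNormStar μ p r ((annulus Ω u).indicator f))) := by
    intro u
    rw [mul_mul_mul_comm, ofReal_two_rpow_mul_neg_mul_ofReal_two_rpow, one_mul,
      conjExp_toReal_inv hp1 hp]
    calc ∫⁻ x in annulus Ω u ∩ E, ENNReal.ofReal |f x| ∂μ
        = ∫⁻ x in annulus Ω u ∩ E, ENNReal.ofReal |(annulus Ω u).indicator f x| ∂μ :=
          setLIntegral_congr_fun ((hΩ.annulus u).inter hE) fun x hx => by
            rw [indicator_of_mem hx.1]
      _ ≤ _ := hlorentz _ _ (hf.indicator (hΩ.annulus u))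
            (measure_mono inter_subset_right |>.trans_lt hEfin.lt_top).ne
  calc ∫⁻ x in E, ENNReal.ofReal |f x| ∂μ
      ≤ C * ∑' u : {u : ℤ // -1 ≤ u},
          (ENNReal.ofReal (2 ^ ((u : ℝ) * -a)) * μ (annulus Ω u ∩ E) ^ (conjExp p).toReal⁻¹)
          * (ENNReal.ofReal (2 ^ ((u : ℝ) * a))
            * lorentzNormStar μ p r ((annulus Ω u).indicator f)) := by
        rw [setLIntegral_eq_tsum_annulus_inter hΩ hE hEΩ, ← ENNReal.tsum_mul_left]
        exact ENNReal.tsum_le_tsum hblock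
    _ ≤ C * (seqNorm (conjExp q) _ * seqNorm q _) :=
        mul_le_mul_right (tsum_mul_le_seqNorm_conjExp_mul_seqNorm hq _ _) _
    _ = _ := by rw [herzNormStar_eq_seqNorm, mul_assoc]

end HerzDuality

theorem lorentzHerz_BFS_sufficient_general {N : ℕ}
    (Ω : Set (Euc N)) (hΩ : MeasurableSet Ω)
    (a : ℝ) (p q r : ℝ≥0∞) (hp1 : 1 < p) (hp : p ≠ ∞) (hq : 1 ≤ q) (hr : 1 ≤ r)
    (E : Set (Euc N)) (hE : MeasurableSet E) (hEΩ : E ⊆ Ω) (hEfin : volume E < ∞) :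
    (herzSetNorm volume Ω a p q E < ∞ →
      herzNormStar volume Ω a p q r (E.indicator fun _ => (1 : ℝ)) < ∞)
    ∧ (herzSetNorm volume Ω (-a) (conjExp p) (conjExp q) E < ∞ →
      ∃ C : ℝ≥0∞, C < ∞ ∧ ∀ f : Euc N → ℝ, Measurable f → (∀ x, 0 ≤ f x) →
        ∫⁻ x in E, ENNReal.ofReal (f x) ∂volume
          ≤ C * herzNormStar volume Ω a p q r f) := by
  have hr0 : r ≠ 0 := (zero_lt_one.trans_le hr).ne'
  refine ⟨fun hS => ?_, fun hS => ?_⟩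
  · obtain ⟨C, hC, hbound⟩ :=
      exists_herzNormStar_indicator_le (μ := volume) (Ω := Ω) (a := a) hp1 hp
        (zero_lt_one.trans_le hq).ne' hr0
    exact (hbound E hEfin.ne).trans_lt (mul_lt_top hC.lt_top
      (seqNorm_lt_top_of_herzSetNorm_lt_top hS))
  · obtain ⟨C, hC, hbound⟩ :=
      exists_setLIntegral_le_herzNormStar (μ := volume) (a := a) hΩ hp1 hp hq hr0
    refine ⟨_, mul_lt_top hC.lt_top (seqNorm_lt_top_of_herzSetNorm_lt_top hS), fun f hf _ =>
      (lintegral_mono fun x => ofReal_le_ofReal (le_abs_self _)).trans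
        (hbound E hE hEΩ hEfin.ne f hf.aemeasurable)⟩

/-- Let `a ∈ ℝ`, `1 < p < ∞`, `1 ≤ q, r ≤ ∞`, and let `p'`, `q'`
be the conjugate exponents of `p`, `q`.  Let `E ⊆ Ω` be measurable with
`μ(E) < ∞`.  Then:
(1) if `Σ_{u≥-1} 2^{uaq} μ(A_u ∩ E)^{q/p} < ∞` (sup-modification for `q = ∞`),
then `‖χ_E‖*_{HL^{a,r}_{p,q}} < ∞`;
(2) if `Σ_{u≥-1} 2^{-uaq'} μ(A_u ∩ E)^{q'/p'} < ∞` (sup-modification for `q' = ∞`),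
then there is a finite constant `C_E` with `∫_E f dμ ≤ C_E ‖f‖*_{HL^{a,r}_{p,q}}`
for every nonnegative measurable `f` on `Ω`. -/
theorem lorentzHerz_BFS_sufficient {N : ℕ} (hN : 1 ≤ N)
    (Ω : Set (Euc N)) (hΩ : MeasurableSet Ω)
    (a : ℝ) (p q r : ℝ≥0∞) (hp1 : 1 < p) (hp : p ≠ ∞) (hq : 1 ≤ q) (hr : 1 ≤ r)
    (E : Set (Euc N)) (hE : MeasurableSet E) (hEΩ : E ⊆ Ω) (hEfin : volume E < ∞) :
    (herzSetNorm volume Ω a p q E < ∞ →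
      herzNormStar volume Ω a p q r (E.indicator fun _ => (1 : ℝ)) < ∞)
    ∧ (herzSetNorm volume Ω (-a) (conjExp p) (conjExp q) E < ∞ →
      ∃ C : ℝ≥0∞, C < ∞ ∧ ∀ f : Euc N → ℝ, Measurable f → (∀ x, 0 ≤ f x) →
        ∫⁻ x in E, ENNReal.ofReal (f x) ∂volume
          ≤ C * herzNormStar volume Ω a p q r f) :=
  lorentzHerz_BFS_sufficient_general Ω hΩ a p q r hp1 hp hq hr E hE hEΩ hEfin
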